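/- arXiv:1407.4595 — 4 statements merged into one kernel-verified Lean document; each statement's English description precedes it below -/
import Mathlib

section
/- Let $R$ be a commutative ring and $\tau \in R$. Let $E : R[X,Y] \to R[X]_{(X+\tau)}$ be the $R$-algebra homomorphism to the localization of $R[X]$ at the multiplicative set generated by $X + \tau$, defined by $X \mapsto X$ and $Y \mapsto X^2/(X+\tau)$. If $R$ is an integral domain and $\tau \neq 0$, then the kernel of $E$ is the principal ideal generated by $f_0 = X^2 - Y(X + \tau)$, i.e. $\ker E = (X^2 - Y(X+\tau))$. -/
open Polynomial MvPolynomial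

/-- Key injectivity lemma: if `a(y) + x·b(y) = 0` in a suitable ring, then `a = b = 0`. -/
lemma aux_key_ker {R L F : Type} [CommRing R] [CommRing L] [IsDomain L] [CommRing F]
    [IsDomain F] [Algebra R L] [Algebra R F] (φ : L →+* F)
    (hφR : ∀ r : R, φ (algebraMap R L r) = algebraMap R F r)
    (hinjF : Function.Injective (algebraMap R F))
    (x y : L) (τ : R)
    (hx : x ≠ 0) (hy : y ≠ 0)
    (hrel : y * (x + algebraMap R L τ) = x ^ 2)
    (hφx : φ x = 0) (hφy : φ y = 0)
    (hτF : algebraMap R F τ ≠ 0) :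
    ∀ n (a b : R[X]), a.natDegree ≤ n → b.natDegree ≤ n →
      Polynomial.aeval y a + x * Polynomial.aeval y b = 0 → a = 0 ∧ b = 0 := by
  have hφcomp : φ.comp (algebraMap R L) = algebraMap R F := RingHom.ext hφR
  have key1 : ∀ p : R[X], φ (Polynomial.aeval y p) = algebraMap R F (p.coeff 0) := by
    intro p
    rw [Polynomial.aeval_def, Polynomial.hom_eval₂, hφy, hφcomp, Polynomial.eval₂_at_zero]
  set t := algebraMap R L τ with ht
  -- the basic step
  have step : ∀ a b : R[X], Polynomial.aeval y a + x * Polynomial.aeval y b = 0 →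
      a.coeff 0 = 0 ∧ b.coeff 0 = 0 ∧
        Polynomial.aeval y a.divX + x * Polynomial.aeval y b.divX = 0 := by
    intro a b h
    set A := Polynomial.aeval y a.divX with hAdef
    set B := Polynomial.aeval y b.divX with hBdef
    have hdecomp : ∀ p : R[X],
        Polynomial.aeval y p = algebraMap R L (p.coeff 0) + y * Polynomial.aeval y p.divX := by
      intro p
      conv_lhs => rw [← Polynomial.X_mul_divX_add p]
      rw [map_add, map_mul, Polynomial.aeval_X, Polynomial.aeval_C, add_comm]
    -- coefficient 0 of a vanishes
    have ha0 : a.coeff 0 = 0 := by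
      apply hinjF
      rw [map_zero]
      have := congrArg φ h
      rw [map_zero, map_add, map_mul, key1, key1, hφx, zero_mul, add_zero] at this
      exact this
    have hA : Polynomial.aeval y a = y * A := by
      rw [hdecomp a, ha0, map_zero, zero_add]
    have hB : Polynomial.aeval y b = algebraMap R L (b.coeff 0) + y * B := hdecomp b
    set b₀L := algebraMap R L (b.coeff 0) with hb₀L
    have h' : y * A + x * (b₀L + y * B) = 0 := by rw [← hA, ← hB]; exact h
    -- multiply by (x + t) and use the relation
    have h2 : x * (x * A + b₀L * (x + t) + x ^ 2 * B) = 0 := by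
      linear_combination (x + t) * h' - (A + x * B) * hrel
    have h3 : x * A + b₀L * (x + t) + x ^ 2 * B = 0 :=
      (mul_eq_zero.mp h2).resolve_left hx
    have hb0 : b.coeff 0 = 0 := by
      apply hinjF
      rw [map_zero]
      have := congrArg φ h3
      rw [map_zero, map_add, map_add, map_mul, map_mul, map_mul, map_pow, hφx] at this
      rw [hb₀L, hφR, map_add, hφx, hφR] at this
      simp only [zero_mul, zero_add, ne_eq, zero_pow, mul_zero, add_zero,
        OfNat.ofNat_ne_zero, not_false_eq_true] at this
      exact (mul_eq_zero.mp this).resolve_right hτF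
    have hb0L : b₀L = 0 := by rw [hb₀L, hb0, map_zero]
    have h4 : y * (A + x * B) = 0 := by
      rw [hb0L] at h'
      linear_combination h'
    have h5 : A + x * B = 0 := (mul_eq_zero.mp h4).resolve_left hy
    exact ⟨ha0, hb0, h5⟩
  intro n
  induction n with
  | zero =>
    intro a b hda hdb h
    obtain ⟨ha0, hb0, -⟩ := step a b h
    refine ⟨?_, ?_⟩
    · rw [Polynomial.eq_C_of_natDegree_le_zero hda, ha0, map_zero]
    · rw [Polynomial.eq_C_of_natDegree_le_zero hdb, hb0, map_zero]
  | succ n ih =>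
    intro a b hda hdb h
    obtain ⟨ha0, hb0, h'⟩ := step a b h
    have hda' : a.divX.natDegree ≤ n := by
      have := Polynomial.natDegree_divX_eq_natDegree_tsub_one (p := a); omega
    have hdb' : b.divX.natDegree ≤ n := by
      have := Polynomial.natDegree_divX_eq_natDegree_tsub_one (p := b); omega
    obtain ⟨ha', hb'⟩ := ih a.divX b.divX hda' hdb' h'
    constructor
    · rw [← Polynomial.X_mul_divX_add a, ha', ha0]; simp
    · rw [← Polynomial.X_mul_divX_add b, hb', hb0]; simp

/-- Let `R` be an integral domain, `τ ≠ 0`, and let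
`E : R[X,Y] → R[X]_{(X+τ)}` be the `R`-algebra map sending `X ↦ X` and
`Y ↦ X²/(X+τ)`.  Then `ker E = (X² - Y(X+τ))`. -/
theorem ker_aeval_localization (R : Type) [CommRing R] [IsDomain R] (τ : R) (hτ : τ ≠ 0) :
    RingHom.ker ((MvPolynomial.aeval
        (fun i : Fin 2 => if i = 0 then
            algebraMap R[X] (Localization.Away (Polynomial.X + Polynomial.C τ)) Polynomial.X
          else
            IsLocalization.mk' (Localization.Away (Polynomial.X + Polynomial.C τ))
              (Polynomial.X ^ 2)
              (⟨Polynomial.X + Polynomial.C τ,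
                Submonoid.mem_powers (Polynomial.X + Polynomial.C τ)⟩ :
                Submonoid.powers (Polynomial.X + Polynomial.C τ : R[X]))) :
        MvPolynomial (Fin 2) R →ₐ[R] Localization.Away (Polynomial.X + Polynomial.C τ))
        : MvPolynomial (Fin 2) R →+* Localization.Away (Polynomial.X + Polynomial.C τ)) =
      Ideal.span {MvPolynomial.X 0 ^ 2 -
        MvPolynomial.X 1 * (MvPolynomial.X 0 + MvPolynomial.C τ)} := by
  classical
  set s : R[X] := Polynomial.X + Polynomial.C τ with hs
  set L := Localization.Away s with hLdef
  have hs0 : s ≠ 0 := Polynomial.X_add_C_ne_zero τ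
  have hle : Submonoid.powers s ≤ nonZeroDivisors R[X] :=
    powers_le_nonZeroDivisors_of_noZeroDivisors hs0
  haveI : IsDomain L := IsLocalization.isDomain_of_le_nonZeroDivisors (S := L) hle
  have hinjL : Function.Injective (algebraMap R[X] L) := IsLocalization.injective L hle
  set x : L := algebraMap R[X] L Polynomial.X with hx_def
  set y : L := IsLocalization.mk' L (Polynomial.X ^ 2) ⟨s, Submonoid.mem_powers s⟩ with hy_def
  set E : MvPolynomial (Fin 2) R →ₐ[R] L :=
    MvPolynomial.aeval (fun i : Fin 2 => if i = 0 then x else y) with hE_def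
  have hE0 : E (MvPolynomial.X 0) = x := by simp [hE_def]
  have hE1 : E (MvPolynomial.X 1) = y := by
    rw [hE_def, MvPolynomial.aeval_X]; norm_num
  have hEC : ∀ r : R, E (MvPolynomial.C r) = algebraMap R L r := fun r => by
    simp [hE_def]
  have hRtoL : ∀ r : R, algebraMap R L r = algebraMap R[X] L (Polynomial.C r) := by
    intro r
    rw [IsScalarTower.algebraMap_apply R R[X] L, Polynomial.algebraMap_eq]
  have hrel : y * (x + algebraMap R L τ) = x ^ 2 := by
    have h := IsLocalization.mk'_spec L (Polynomial.X ^ 2)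
      (⟨s, Submonoid.mem_powers s⟩ : Submonoid.powers s)
    rw [hRtoL τ]
    rw [← hy_def] at h
    simpa [hs, map_add, map_pow, ← hx_def] using h
  have hEf₀ : E (MvPolynomial.X 0 ^ 2 -
      MvPolynomial.X 1 * (MvPolynomial.X 0 + MvPolynomial.C τ)) = 0 := by
    rw [map_sub, map_pow, map_mul, map_add, hE0, hE1, hEC, hrel, sub_self]
  -- fraction field side
  set F := FractionRing R with hF
  have hinjF : Function.Injective (algebraMap R F) := IsFractionRing.injective R F
  have hτF : algebraMap R F τ ≠ 0 := fun h => hτ (hinjF (by rw [h, map_zero]))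
  set ψ : R[X] →+* F := Polynomial.eval₂RingHom (algebraMap R F) 0 with hψ
  have hψs : ψ s = algebraMap R F τ := by
    simp [hψ, hs]
  have hunit : ∀ u : Submonoid.powers s, IsUnit (ψ (u : R[X])) := by
    rintro ⟨u, n, rfl⟩
    simp only [map_pow, hψs]
    exact (hτF.isUnit).pow n
  set φ : L →+* F := IsLocalization.lift hunit with hφ
  have hφalg : ∀ q : R[X], φ (algebraMap R[X] L q) = ψ q := fun q =>
    IsLocalization.lift_eq hunit q
  have hφR : ∀ r : R, φ (algebraMap R L r) = algebraMap R F r := by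
    intro r; rw [hRtoL, hφalg]; simp [hψ]
  have hφx : φ x = 0 := by rw [hx_def, hφalg]; simp [hψ]
  have hxne : x ≠ 0 := fun h =>
    Polynomial.X_ne_zero (R := R) (hinjL (by rw [map_zero, ← hx_def]; exact h))
  have hyne : y ≠ 0 := by
    intro h0
    have h1 : (0 : L) = x ^ 2 := by rw [← hrel, h0, zero_mul]
    exact pow_ne_zero 2 hxne h1.symm
  have hφy : φ y = 0 := by
    have h2 := congrArg φ hrel
    rw [map_mul, map_add, map_pow, hφx, hφR] at h2
    simp only [zero_add, ne_eq, OfNat.ofNat_ne_zero, not_false_eq_true, zero_pow] at h2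
    exact (mul_eq_zero.mp h2).resolve_right hτF
  -- the polynomial-in-two-steps side
  set ρ : R[X] →+* MvPolynomial (Fin 2) R :=
    Polynomial.eval₂RingHom MvPolynomial.C (MvPolynomial.X 1) with hρ
  set σ : (R[X])[X] →+* MvPolynomial (Fin 2) R :=
    Polynomial.eval₂RingHom ρ (MvPolynomial.X 0) with hσ
  set θ : MvPolynomial (Fin 2) R →ₐ[R] (R[X])[X] :=
    MvPolynomial.aeval
      (fun i : Fin 2 => if i = 0 then Polynomial.X else Polynomial.C Polynomial.X) with hθ
  have hσθ : ∀ q : MvPolynomial (Fin 2) R, σ (θ q) = q := by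
    intro q
    have hcomp : σ.comp (θ : MvPolynomial (Fin 2) R →+* (R[X])[X]) = RingHom.id _ := by
      apply MvPolynomial.ringHom_ext
      · intro r
        simp [hσ, hρ, hθ, Polynomial.algebraMap_apply]
      · intro i
        fin_cases i <;> simp [hσ, hρ, hθ]
    exact RingHom.congr_fun hcomp q
  have hEρ : ∀ q : R[X], E (ρ q) = Polynomial.aeval y q := by
    intro q
    have hcomp : ((E : MvPolynomial (Fin 2) R →+* L).comp ρ) =
        ((Polynomial.aeval y : R[X] →ₐ[R] L) : R[X] →+* L) := by
      apply Polynomial.ringHom_ext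
      · intro a; simp [hρ, hEC]
      · simp [hρ, hE1]
    exact RingHom.congr_fun hcomp q
  set f₀' : (R[X])[X] := Polynomial.X ^ 2 -
    Polynomial.C Polynomial.X * (Polynomial.X + Polynomial.C (Polynomial.C τ)) with hf₀'
  have hdegsub : (Polynomial.C Polynomial.X *
      (Polynomial.X + Polynomial.C (Polynomial.C τ)) : (R[X])[X]).degree < 2 := by
    apply lt_of_le_of_lt (Polynomial.degree_mul_le _ _)
    rw [Polynomial.degree_C (Polynomial.X_ne_zero (R := R)), Polynomial.degree_X_add_C]
    norm_num
  have hmonic : f₀'.Monic := by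
    rw [hf₀']
    exact Polynomial.monic_X_pow_sub (by exact_mod_cast hdegsub)
  have hdegf₀ : f₀'.degree = 2 := by
    rw [hf₀', Polynomial.degree_sub_eq_left_of_degree_lt
      (by rw [Polynomial.degree_X_pow]; exact_mod_cast hdegsub), Polynomial.degree_X_pow]
    norm_num
  have hσf₀ : σ f₀' = MvPolynomial.X 0 ^ 2 -
      MvPolynomial.X 1 * (MvPolynomial.X 0 + MvPolynomial.C τ) := by
    simp [hσ, hρ, hf₀']
  apply le_antisymm
  · intro p hp
    rw [RingHom.mem_ker] at hp
    set q := θ p /ₘ f₀' with hq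
    set r := θ p %ₘ f₀' with hr
    have hdiv : r + f₀' * q = θ p := Polynomial.modByMonic_add_div (θ p) f₀'
    have hdegr : r.degree ≤ 1 := by
      have hlt := Polynomial.degree_modByMonic_lt (θ p) hmonic
      rw [hdegf₀, ← hr] at hlt
      by_cases h0 : r = 0
      · rw [h0]; simp
      · rw [Polynomial.degree_eq_natDegree h0] at hlt ⊢
        have h2 : r.natDegree < 2 := by exact_mod_cast hlt
        exact_mod_cast Nat.lt_succ_iff.mp h2
    have hrX : r = Polynomial.C (r.coeff 1) * Polynomial.X + Polynomial.C (r.coeff 0) :=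
      Polynomial.eq_X_add_C_of_degree_le_one hdegr
    have hp2 : p = σ r + (MvPolynomial.X 0 ^ 2 -
        MvPolynomial.X 1 * (MvPolynomial.X 0 + MvPolynomial.C τ)) * σ q := by
      rw [← hσf₀, ← map_mul, ← map_add, hdiv, hσθ]
    have hσr : σ r = ρ (r.coeff 1) * MvPolynomial.X 0 + ρ (r.coeff 0) := by
      conv_lhs => rw [hrX]
      simp [hσ]
    have hEr : Polynomial.aeval y (r.coeff 0) + x * Polynomial.aeval y (r.coeff 1) = 0 := by
      have h3 := hp
      simp only [RingHom.coe_coe] at h3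
      rw [hp2, map_add, map_mul, hEf₀, zero_mul, add_zero, hσr] at h3
      rw [map_add, map_mul, hEρ, hEρ, hE0] at h3
      linear_combination h3
    obtain ⟨h0, h1⟩ := aux_key_ker φ hφR hinjF x y τ hxne hyne hrel hφx hφy hτF
      (max (r.coeff 0).natDegree (r.coeff 1).natDegree) _ _ (le_max_left _ _)
      (le_max_right _ _) hEr
    have hr0 : r = 0 := by rw [hrX, h0, h1]; simp
    rw [Ideal.mem_span_singleton]
    exact ⟨σ q, by rw [hp2, hr0, map_zero, zero_add]⟩
  · rw [Ideal.span_le, Set.singleton_subset_iff, SetLike.mem_coe, RingHom.mem_ker]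
    simpa using hEf₀
end

section
/- Let $R$ be a commutative ring, $1 \leq \tau$, and define on the free $R$-module with basis $\{T^a\}_{a \in \mathbb{N}}$ a bilinear multiplication by $T^a * T^b = \tau T^{a+b} + T^{a+b+1}$ if both $a$ and $b$ are odd, and $T^a * T^b = T^{a+b}$ otherwise (where $\tau$ is regarded as an element of $R$). Then this multiplication is associative and $T^0$ is a two-sided identity, making $R[T]^\tau$ into an associative unital $R$-algebra. -/
/-!
The multiplication is `R`-bilinear by construction, so associativity only has to be checked on
basis elements `T^a * T^b * T^c`, by cases on the parities of `a`, `b`, `c`. If at most one of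
them is odd no twist occurs on either side. Otherwise both sides come out as
`τ T^(a+b+c) + T^(a+b+c+1)` when exactly two are odd, and as
`τ T^(a+b+c) + τ T^(a+b+c+1) + T^(a+b+c+2)` when all three are.
-/

open Finsupp

noncomputable def tmul (R : Type) [CommRing R] (τ : R) (f g : ℕ →₀ R) : ℕ →₀ R :=
  f.sum fun a ra => g.sum fun b rb =>
    (ra * rb) • (if Odd a ∧ Odd b then
        τ • Finsupp.single (a + b) (1 : R) + Finsupp.single (a + b + 1) (1 : R)
      else Finsupp.single (a + b) (1 : R))

variable {R : Type} [CommRing R] (τ : R)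

noncomputable def tmulBasis (a b : ℕ) : ℕ →₀ R :=
  if Odd a ∧ Odd b then τ • single (a + b) 1 + single (a + b + 1) 1 else single (a + b) 1

theorem tmulBasis_of_even_left {a : ℕ} (ha : Even a) (b : ℕ) :
    tmulBasis τ a b = single (a + b) (1 : R) := by
  simp [tmulBasis, Nat.not_odd_iff_even.mpr ha]

theorem tmulBasis_of_even_right (a : ℕ) {b : ℕ} (hb : Even b) :
    tmulBasis τ a b = single (a + b) (1 : R) := by
  simp [tmulBasis, Nat.not_odd_iff_even.mpr hb]

theorem tmulBasis_of_odd_of_odd {a b : ℕ} (ha : Odd a) (hb : Odd b) :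
    tmulBasis τ a b = τ • single (a + b) (1 : R) + single (a + b + 1) 1 := by
  simp [tmulBasis, ha, hb]

noncomputable def tmulₗ : (ℕ →₀ R) →ₗ[R] (ℕ →₀ R) →ₗ[R] ℕ →₀ R :=
  linearCombination R fun a => linearCombination R (tmulBasis τ a)

theorem tmul_eq_tmulₗ (f g : ℕ →₀ R) : tmul R τ f g = tmulₗ τ f g := by
  simp [tmul, tmulₗ, linearCombination_apply, Finsupp.sum, Finset.smul_sum, mul_smul, tmulBasis]

@[simp]
theorem tmulₗ_single_single (a b : ℕ) (r s : R) :
    tmulₗ τ (single a r) (single b s) = (r * s) • tmulBasis τ a b := by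
  simp [tmulₗ, mul_smul]

theorem tmulₗ_tmulBasis_assoc (a b c : ℕ) :
    tmulₗ τ (tmulBasis τ a b) (single c 1) = tmulₗ τ (single a 1) (tmulBasis τ b c) := by
  rcases Nat.mod_two_eq_zero_or_one a with ha | ha <;>
    rcases Nat.mod_two_eq_zero_or_one b with hb | hb <;>
    rcases Nat.mod_two_eq_zero_or_one c with hc | hc <;>
    simp (disch := simp only [Nat.even_iff, Nat.odd_iff]; omega) only [tmulBasis_of_even_left,
      tmulBasis_of_even_right, tmulBasis_of_odd_of_odd, map_add, map_smul, LinearMap.add_apply,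
      LinearMap.smul_apply, tmulₗ_single_single, one_mul, one_smul, smul_add, add_assoc] <;>
    ring_nf

theorem tmulₗ_assoc (f g h : ℕ →₀ R) :
    tmulₗ τ (tmulₗ τ f g) h = tmulₗ τ f (tmulₗ τ g h) := by
  suffices (tmulₗ τ).compr₂ (tmulₗ τ) =
      (LinearMap.llcomp R _ _ _).compl₁₂ (tmulₗ τ) (tmulₗ τ) from congr($this f g h)
  ext a b c : 6
  simpa using tmulₗ_tmulBasis_assoc τ a b c

theorem tmulₗ_one_left : tmulₗ τ (single 0 (1 : R)) = LinearMap.id := by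
  ext b : 2
  simp [tmulBasis_of_even_left τ Even.zero]

theorem tmulₗ_one_right : (tmulₗ τ).flip (single 0 (1 : R)) = LinearMap.id := by
  ext a : 2
  simp [tmulBasis_of_even_right τ _ Even.zero]

theorem tmul_assoc_one_general (R : Type) [CommRing R] (τ : ℕ) :
    (∀ f g h : ℕ →₀ R, tmul R (τ : R) (tmul R (τ : R) f g) h
        = tmul R (τ : R) f (tmul R (τ : R) g h)) ∧
    (∀ f : ℕ →₀ R, tmul R (τ : R) (Finsupp.single 0 (1 : R)) f = f) ∧
    (∀ f : ℕ →₀ R, tmul R (τ : R) f (Finsupp.single 0 (1 : R)) = f) ∧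
    (∀ f g h : ℕ →₀ R, tmul R (τ : R) (f + g) h
        = tmul R (τ : R) f h + tmul R (τ : R) g h) ∧
    (∀ f g h : ℕ →₀ R, tmul R (τ : R) f (g + h)
        = tmul R (τ : R) f g + tmul R (τ : R) f h) ∧
    (∀ (r : R) (f g : ℕ →₀ R), tmul R (τ : R) (r • f) g = r • tmul R (τ : R) f g) ∧
    (∀ (r : R) (f g : ℕ →₀ R), tmul R (τ : R) f (r • g) = r • tmul R (τ : R) f g) := by
  simp only [tmul_eq_tmulₗ]
  exact ⟨tmulₗ_assoc _,
    fun f => congr($(tmulₗ_one_left _) f),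
    fun f => congr($(tmulₗ_one_right _) f),
    fun f g h => by rw [map_add, LinearMap.add_apply],
    fun f g h => map_add _ g h,
    fun r f g => by rw [map_smul, LinearMap.smul_apply],
    fun r f g => map_smul _ r g⟩

/-- For `1 ≤ τ` (regarded in `R`), the twisted multiplication `tmul` is `R`-bilinear,
associative, and has `T^0` as a two-sided identity, so it makes `R[T]^τ` into an
associative unital `R`-algebra. -/
theorem tmul_assoc_one (R : Type) [CommRing R] (τ : ℕ) (hτ : 1 ≤ τ) :
    (∀ f g h : ℕ →₀ R, tmul R (τ : R) (tmul R (τ : R) f g) h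
        = tmul R (τ : R) f (tmul R (τ : R) g h)) ∧
    (∀ f : ℕ →₀ R, tmul R (τ : R) (Finsupp.single 0 (1 : R)) f = f) ∧
    (∀ f : ℕ →₀ R, tmul R (τ : R) f (Finsupp.single 0 (1 : R)) = f) ∧
    (∀ f g h : ℕ →₀ R, tmul R (τ : R) (f + g) h
        = tmul R (τ : R) f h + tmul R (τ : R) g h) ∧
    (∀ f g h : ℕ →₀ R, tmul R (τ : R) f (g + h)
        = tmul R (τ : R) f g + tmul R (τ : R) f h) ∧
    (∀ (r : R) (f g : ℕ →₀ R), tmul R (τ : R) (r • f) g = r • tmul R (τ : R) f g) ∧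
    (∀ (r : R) (f g : ℕ →₀ R), tmul R (τ : R) f (r • g) = r • tmul R (τ : R) f g) :=
  tmul_assoc_one_general R τ
end

section
/- Let $R$ be a commutative ring and $\tau \in R$ a unit. Then the map sending $T \mapsto X$ and $T^2 \mapsto X^2/(X+\tau)$ extends to an $R$-algebra isomorphism $R[T]^\tau \cong R[X]_{(X+\tau)}$, where $R[T]^\tau$ is the twisted polynomial algebra with multiplication $T^a * T^b = \tau T^{a+b} + T^{a+b+1}$ if $a, b$ both odd and $T^a * T^b = T^{a+b}$ otherwise. -/
open Polynomial Finsupp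
open scoped nonZeroDivisors

/-!
In `R[X]_{(X+τ)}` put `x = X` and `u = X²/(X+τ)`, so that `u (x + τ) = x²`. The elements
`b_{2i} = uⁱ` and `b_{2i+1} = x uⁱ` multiply like the `Tᵃ` of `R[T]^τ`, the only nontrivial case
being `x · x = x² = τ u + x u`; so `Tᵃ ↦ b_a` is multiplicative.
It is injective: `(X+τ)ᴺ ∑ f_a b_a` is the polynomial `∑ f_a Xᵃ (X+τ)^(N - ⌊a/2⌋)`, whose
coefficient at the least `a` in the support of `f` is `f_a τ^(N - ⌊a/2⌋) ≠ 0`.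
It is surjective: its image is a subalgebra containing `x` and `τ²/(X+τ) = u - x + τ`, and
`R[X]_{(X+τ)}` is generated as an `R`-algebra by `X` and `1/(X+τ)`.
-/

theorem Polynomial.eq_zero_of_sum_C_mul_X_pow_mul_eq_zero {R : Type*} [Semiring R]
    {f : ℕ →₀ R} {q : ℕ → R[X]} (hq : ∀ a, (q a).coeff 0 ∈ R⁰)
    (h : (f.sum fun a r => C r * X ^ a * q a) = 0) : f = 0 := by
  by_contra hf
  have hsupp : f.support.Nonempty := Finsupp.support_nonempty_iff.2 hf
  set a₀ := f.support.min' hsupp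
  have hcoeff : (f.sum fun a r => C r * X ^ a * q a).coeff a₀ = f a₀ * (q a₀).coeff 0 := by
    rw [Finsupp.sum, finsetSum_coeff, Finset.sum_eq_single a₀]
    · rw [mul_assoc, coeff_C_mul, coeff_X_pow_mul', if_pos le_rfl, Nat.sub_self]
    · intro b hb hba₀
      have hlt : a₀ < b := lt_of_le_of_ne (f.support.min'_le b hb) (Ne.symm hba₀)
      rw [mul_assoc, coeff_C_mul, coeff_X_pow_mul', if_neg (not_le.2 hlt), mul_zero]
    · exact fun h => absurd (f.support.min'_mem hsupp) h
  rw [h, coeff_zero, eq_comm, mul_right_mem_nonZeroDivisors_eq_zero_iff (hq a₀)] at hcoeff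
  exact Finsupp.mem_support_iff.1 (f.support.min'_mem hsupp) hcoeff

theorem Localization.Away.adjoin_X_invSelf_eq_top {R : Type*} [CommRing R] (p : R[X]) :
    Algebra.adjoin R {algebraMap R[X] (Localization.Away p) X,
      IsLocalization.Away.invSelf p} = ⊤ := by
  refine eq_top_iff.2 fun z _ => ?_
  obtain ⟨n, q, hz⟩ := IsLocalization.Away.surj p z
  have hz' : z = algebraMap R[X] _ q * IsLocalization.Away.invSelf p ^ n := by
    rw [← hz, mul_assoc, ← mul_pow, IsLocalization.Away.mul_invSelf, one_pow, mul_one]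
  have hq : algebraMap R[X] (Localization.Away p) q ∈
      Algebra.adjoin R {algebraMap R[X] (Localization.Away p) X} := by
    rw [← aeval_X_left_apply q, ← aeval_algebraMap_apply]
    exact aeval_mem_adjoin_singleton R _
  rw [hz']
  exact mul_mem (Algebra.adjoin_mono (Set.singleton_subset_iff.2 (Set.mem_insert _ _)) hq)
    (pow_mem (Algebra.subset_adjoin (Set.mem_insert_of_mem _ (Set.mem_singleton _))) n)

namespace TwistedPolynomial

variable {R : Type} [CommRing R] (τ : R)

abbrev Loc : Type := Localization.Away (X + C τ : R[X])

noncomputable def locX : Loc τ := algebraMap R[X] _ X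

noncomputable def locInv : Loc τ := IsLocalization.Away.invSelf (X + C τ)

noncomputable def locU : Loc τ := locX τ ^ 2 * locInv τ

theorem algebraMap_X_add_C : algebraMap R[X] (Loc τ) (X + C τ) = locX τ + algebraMap R _ τ := by
  rw [map_add, IsScalarTower.algebraMap_apply R R[X] (Loc τ), algebraMap_eq]
  rfl

theorem locX_add_mul_locInv : (locX τ + algebraMap R _ τ) * locInv τ = 1 := by
  rw [← algebraMap_X_add_C]
  exact IsLocalization.Away.mul_invSelf _

theorem locU_mul_locX_add : locU τ * (locX τ + algebraMap R _ τ) = locX τ ^ 2 := by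
  rw [locU, mul_assoc, mul_comm (locInv τ), locX_add_mul_locInv, mul_one]

theorem locU_eq_mk' : locU τ = IsLocalization.mk' (Loc τ) (X ^ 2 : R[X])
    ⟨X + C τ, Submonoid.mem_powers _⟩ := by
  rw [IsLocalization.mk'_eq_mul_mk'_one, map_pow]
  rfl

theorem sq_smul_locInv : τ ^ 2 • locInv τ = locU τ - locX τ + algebraMap R _ τ := by
  rw [Algebra.smul_def, locU, map_pow]
  linear_combination (algebraMap R (Loc τ) τ - locX τ) * locX_add_mul_locInv τ

/-- The image of `Tᵃ`. -/
noncomputable def twistedBasis (a : ℕ) : Loc τ := locX τ ^ (a % 2) * locU τ ^ (a / 2)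

@[simp] theorem twistedBasis_zero : twistedBasis τ 0 = 1 := by simp [twistedBasis]

@[simp] theorem twistedBasis_one : twistedBasis τ 1 = locX τ := by simp [twistedBasis]

@[simp] theorem twistedBasis_two : twistedBasis τ 2 = locU τ := by simp [twistedBasis]

theorem twistedBasis_mul (a b : ℕ) : twistedBasis τ a * twistedBasis τ b =
    if Odd a ∧ Odd b then τ • twistedBasis τ (a + b) + twistedBasis τ (a + b + 1)
    else twistedBasis τ (a + b) := by
  simp only [twistedBasis, Nat.odd_iff]
  split_ifs with h
  · obtain ⟨ha, hb⟩ := h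
    rw [ha, hb, show (a + b) % 2 = 0 by omega, show (a + b + 1) % 2 = 1 by omega,
      show (a + b + 1) / 2 = (a + b) / 2 by omega, show (a + b) / 2 = a / 2 + b / 2 + 1 by omega,
      Algebra.smul_def]
    linear_combination -locU τ ^ (a / 2 + b / 2) * locU_mul_locX_add τ
  · rw [show (a + b) % 2 = a % 2 + b % 2 by omega, show (a + b) / 2 = a / 2 + b / 2 by omega]
    ring

theorem algebraMap_pow_mul_twistedBasis {a N : ℕ} (h : a / 2 ≤ N) :
    algebraMap R[X] (Loc τ) ((X + C τ) ^ N) * twistedBasis τ a =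
      algebraMap R[X] (Loc τ) (X ^ a * (X + C τ) ^ (N - a / 2)) := by
  obtain ⟨k, rfl⟩ := Nat.exists_eq_add_of_le h
  rw [Nat.add_sub_cancel_left, map_pow, map_mul, map_pow, map_pow, algebraMap_X_add_C,
    twistedBasis, show algebraMap R[X] (Loc τ) X = locX τ from rfl]
  conv_rhs => rw [← Nat.mod_add_div a 2, pow_add, pow_mul, ← locU_mul_locX_add, mul_pow]
  ring

noncomputable def toLoc : (ℕ →₀ R) →ₗ[R] Loc τ := Finsupp.linearCombination R (twistedBasis τ)

theorem toLoc_apply (f : ℕ →₀ R) : toLoc τ f = f.sum fun a r => r • twistedBasis τ a :=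
  Finsupp.linearCombination_apply _ _

theorem toLoc_single (a : ℕ) (r : R) : toLoc τ (Finsupp.single a r) = r • twistedBasis τ a :=
  Finsupp.linearCombination_single _ _ _

theorem toLoc_tmul (f g : ℕ →₀ R) : toLoc τ (tmul R τ f g) = toLoc τ f * toLoc τ g := by
  rw [tmul, map_finsuppSum, toLoc_apply τ f, Finsupp.sum_mul]
  refine Finsupp.sum_congr fun a _ => ?_
  rw [map_finsuppSum, toLoc_apply τ g, Finsupp.mul_sum]
  refine Finsupp.sum_congr fun b _ => ?_
  rw [map_smul, smul_mul_smul_comm, twistedBasis_mul]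
  split_ifs
  · rw [map_add, map_smul, toLoc_single, toLoc_single, one_smul, one_smul]
  · rw [toLoc_single, one_smul]

theorem toLoc_injective (hτ : τ ∈ R⁰) : Function.Injective (toLoc τ) := by
  refine (injective_iff_map_eq_zero _).2 fun f hf => ?_
  set N := f.support.sup id
  have hclear : algebraMap R[X] (Loc τ)
      (f.sum fun a r => C r * X ^ a * (X + C τ) ^ (N - a / 2)) =
      algebraMap R[X] (Loc τ) ((X + C τ) ^ N) * toLoc τ f := by
    rw [toLoc_apply, Finsupp.mul_sum, map_finsuppSum]
    refine Finsupp.sum_congr fun a ha => ?_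
    have hle : a / 2 ≤ N := (Nat.div_le_self a 2).trans (Finset.le_sup (f := id) ha)
    rw [mul_smul_comm, algebraMap_pow_mul_twistedBasis τ hle, Algebra.smul_def,
      IsScalarTower.algebraMap_apply R R[X] (Loc τ), ← map_mul, mul_assoc, algebraMap_eq]
  rw [hf, mul_zero] at hclear
  have hloc : Function.Injective (algebraMap R[X] (Loc τ)) :=
    IsLocalization.injective _ (Submonoid.powers_le.2 (monic_X_add_C τ).mem_nonZeroDivisors)
  refine eq_zero_of_sum_C_mul_X_pow_mul_eq_zero (fun a => ?_)
    (hloc (hclear.trans (map_zero _).symm))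
  simpa [coeff_zero_eq_eval_zero] using pow_mem hτ (N - a / 2)

theorem toLoc_surjective (hτ : IsUnit τ) : Function.Surjective (toLoc τ) := by
  have hmul : ∀ y z, y ∈ LinearMap.range (toLoc τ) → z ∈ LinearMap.range (toLoc τ) →
      y * z ∈ LinearMap.range (toLoc τ) := by
    rintro _ _ ⟨f, rfl⟩ ⟨g, rfl⟩
    exact ⟨tmul R τ f g, toLoc_tmul τ f g⟩
  have hbasis (a : ℕ) : twistedBasis τ a ∈ LinearMap.range (toLoc τ) :=
    ⟨Finsupp.single a 1, by rw [toLoc_single, one_smul]⟩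
  let A := (LinearMap.range (toLoc τ)).toSubalgebra
    (by simpa only [twistedBasis_zero] using hbasis 0) hmul
  have hX : locX τ ∈ A := twistedBasis_one τ ▸ hbasis 1
  have hInv : locInv τ ∈ A := by
    refine ((LinearMap.range (toLoc τ)).smul_mem_iff_of_isUnit (hτ.pow 2)).1 ?_
    rw [sq_smul_locInv]
    refine add_mem (sub_mem (by simpa only [twistedBasis_two] using hbasis 2) hX) ?_
    simpa [Algebra.algebraMap_eq_smul_one] using (LinearMap.range (toLoc τ)).smul_mem τ (hbasis 0)
  have hA : A = ⊤ := by
    rw [eq_top_iff, ← Localization.Away.adjoin_X_invSelf_eq_top, Algebra.adjoin_le_iff]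
    exact Set.insert_subset hX (Set.singleton_subset_iff.2 hInv)
  exact fun z => (show z ∈ A from hA ▸ Algebra.mem_top)

theorem toLoc_bijective (hτ : IsUnit τ) : Function.Bijective (toLoc τ) :=
  ⟨toLoc_injective τ hτ.mem_nonZeroDivisors, toLoc_surjective τ hτ⟩

end TwistedPolynomial

/-- For a unit `τ`, the assignment `T ↦ X`, `T² ↦ X²/(X+τ)` extends to an `R`-algebra
isomorphism `R[T]^τ ≅ R[X]_{(X+τ)}`. -/
theorem twisted_iso_localization (R : Type) [CommRing R] (τ : R) (hτ : IsUnit τ) :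
    ∃ e : (ℕ →₀ R) ≃ₗ[R] Localization.Away (Polynomial.X + Polynomial.C τ),
      (∀ f g : ℕ →₀ R, e (tmul R τ f g) = e f * e g) ∧
      e (Finsupp.single 0 1) = 1 ∧
      e (Finsupp.single 1 1) =
        algebraMap R[X] (Localization.Away (Polynomial.X + Polynomial.C τ)) Polynomial.X ∧
      e (Finsupp.single 2 1) =
        IsLocalization.mk' (Localization.Away (Polynomial.X + Polynomial.C τ))
          (Polynomial.X ^ 2)
          (⟨Polynomial.X + Polynomial.C τ,
            Submonoid.mem_powers (Polynomial.X + Polynomial.C τ)⟩ :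
              Submonoid.powers (Polynomial.X + Polynomial.C τ)) := by
  refine ⟨.ofBijective (TwistedPolynomial.toLoc τ) (TwistedPolynomial.toLoc_bijective τ hτ),
    TwistedPolynomial.toLoc_tmul τ, ?_, ?_, ?_⟩ <;>
    rw [LinearEquiv.ofBijective_apply, TwistedPolynomial.toLoc_single, one_smul]
  · exact TwistedPolynomial.twistedBasis_zero τ
  · exact TwistedPolynomial.twistedBasis_one τ
  · rw [TwistedPolynomial.twistedBasis_two, TwistedPolynomial.locU_eq_mk']
end

section
/- Let $R$ be a commutative ring, $S$ a commutative $R$-algebra, $A$ an $R$-algebra and $B$ an $S$-algebra. Suppose given a twisting map $\psi_1 : S \otimes_R A \to A \otimes_R S$ over $R$ making $C := A \otimes_R^{\psi_1} S$ an associative unital $S$-algebra, and a twisting map $\psi_2 : B \otimes_S C \to C \otimes_S B$ over $S$. Define $\psi_3 = \gamma \circ \psi_2 \circ (\mathrm{id}_B \otimes \iota_A) : B \otimes_R A \to A \otimes_R B$, where $\iota_A(a) = a \otimes 1_S$ and $\gamma(\sum_i a_i \otimes s_i \otimes b_i) = \sum_i a_i \otimes s_i b_i$. Then the $R$-linear map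 $f : A \otimes_R B \to C \otimes_S B$, $a \otimes b \mapsto (a \otimes 1_S) \otimes b$, is an isomorphism of $R$-modules intertwining the multiplications $\mu_{\psi_3}$ and $\mu_{\psi_2}$, i.e. $A \otimes_R^{\psi_3} B \cong (A \otimes_R^{\psi_1} S) \otimes_S^{\psi_2} B$ as $R$-algebras. -/
open TensorProduct

attribute [local instance] Algebra.TensorProduct.rightAlgebra

/-! The contraction `γ` inverts `f`, because `(a ⊗ s) ⊗ b = (a ⊗ 1) ⊗ s b` in `C ⊗_S B`.
For multiplicativity, `ψ₁(1 ⊗ a) = a ⊗ 1` makes `ι_A : A → C` multiplicative, so `f` turns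
`a ⊗ b ↦ a₁ a ⊗ b b₂` into `c ⊗ b ↦ ι_A(a₁) c ⊗ b b₂`. Applied to `γ (ψ₂ (b₁ ⊗ ι_A a₂))`,
where `f ∘ γ = id`, this turns `μ₃ (a₁ ⊗ b₁) (a₂ ⊗ b₂)` into `μ₂ (f (a₁ ⊗ b₁)) (f (a₂ ⊗ b₂))`. -/

section IteratedTwistedTensor

variable {R S A B : Type*} [CommSemiring R] [CommSemiring S] [Algebra R S]
  [Semiring A] [Algebra R A]

theorem rightAlgebra_smul_tmul (s s' : S) (a : A) :
    s • (a ⊗ₜ[R] s') = a ⊗ₜ[R] (s * s') := by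
  rw [Algebra.smul_def, Algebra.TensorProduct.right_algebraMap_apply,
    Algebra.TensorProduct.tmul_mul_tmul, one_mul]

theorem twistedMul_tmul_one_tmul_one
    (ψ : S ⊗[R] A →ₗ[R] A ⊗[R] S) (hψ : ∀ a : A, ψ ((1 : S) ⊗ₜ[R] a) = a ⊗ₜ[R] (1 : S))
    (μ : (A ⊗[R] S) →ₗ[S] (A ⊗[R] S) →ₗ[S] (A ⊗[R] S))
    (hμ : ∀ (a₁ a₂ : A) (s₁ s₂ : S), μ (a₁ ⊗ₜ[R] s₁) (a₂ ⊗ₜ[R] s₂) =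
      TensorProduct.map (LinearMap.mulLeft R a₁) (LinearMap.mulRight R s₂) (ψ (s₁ ⊗ₜ[R] a₂)))
    (a₁ a₂ : A) :
    μ (a₁ ⊗ₜ[R] (1 : S)) (a₂ ⊗ₜ[R] (1 : S)) = (a₁ * a₂) ⊗ₜ[R] (1 : S) := by
  rw [hμ, hψ, TensorProduct.map_tmul, LinearMap.mulLeft_apply, LinearMap.mulRight_apply, one_mul]

variable [Semiring B] [Algebra R B] [Algebra S B] [IsScalarTower R S B]

variable (R S A B) in
def tmulOneTmul : A ⊗[R] B →ₗ[R] (A ⊗[R] S) ⊗[S] B :=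
  TensorProduct.lift <| LinearMap.mk₂ R (fun a b => (a ⊗ₜ[R] (1 : S)) ⊗ₜ[S] b)
    (fun _ _ _ => by rw [add_tmul, add_tmul])
    (fun _ _ _ => by rw [smul_tmul', smul_tmul'])
    (fun _ _ _ => tmul_add _ _ _)
    (fun r a b => by
      rw [smul_tmul', smul_tmul', ← algebraMap_smul S r b, ← smul_tmul,
        rightAlgebra_smul_tmul, mul_one, smul_tmul, Algebra.smul_def, mul_one])

@[simp]
theorem tmulOneTmul_tmul (a : A) (b : B) :
    tmulOneTmul R S A B (a ⊗ₜ[R] b) = (a ⊗ₜ[R] (1 : S)) ⊗ₜ[S] b :=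
  rfl

theorem leftInverse_tmulOneTmul {γ : (A ⊗[R] S) ⊗[S] B →+ A ⊗[R] B}
    (hγ : ∀ (a : A) (s : S) (b : B), γ ((a ⊗ₜ[R] s) ⊗ₜ[S] b) = a ⊗ₜ[R] (s • b)) :
    Function.LeftInverse γ (tmulOneTmul R S A B) := by
  intro x
  induction x using TensorProduct.induction_on with
  | zero => simp
  | tmul a b => rw [tmulOneTmul_tmul, hγ, one_smul]
  | add x y hx hy => rw [map_add, map_add, hx, hy]

theorem rightInverse_tmulOneTmul {γ : (A ⊗[R] S) ⊗[S] B →+ A ⊗[R] B}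
    (hγ : ∀ (a : A) (s : S) (b : B), γ ((a ⊗ₜ[R] s) ⊗ₜ[S] b) = a ⊗ₜ[R] (s • b)) :
    Function.RightInverse γ (tmulOneTmul R S A B) := by
  intro y
  induction y using TensorProduct.induction_on with
  | zero => simp
  | tmul c b =>
    induction c using TensorProduct.induction_on with
    | zero => simp
    | tmul a s => rw [hγ, tmulOneTmul_tmul, ← smul_tmul, rightAlgebra_smul_tmul, mul_one]
    | add c₁ c₂ h₁ h₂ => rw [add_tmul, map_add, map_add, h₁, h₂]
  | add x y hx hy => rw [map_add, map_add, hx, hy]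

theorem tmulOneTmul_map_mulLeft_mulRight (μ : (A ⊗[R] S) →ₗ[S] (A ⊗[R] S) →ₗ[S] (A ⊗[R] S))
    (a₁ : A) (hμ : ∀ a : A, μ (a₁ ⊗ₜ[R] (1 : S)) (a ⊗ₜ[R] (1 : S)) = (a₁ * a) ⊗ₜ[R] (1 : S))
    (b₂ : B) (x : A ⊗[R] B) :
    tmulOneTmul R S A B (TensorProduct.map (LinearMap.mulLeft R a₁) (LinearMap.mulRight R b₂) x) =
      TensorProduct.map (μ (a₁ ⊗ₜ[R] (1 : S))) (LinearMap.mulRight S b₂)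
        (tmulOneTmul R S A B x) := by
  induction x using TensorProduct.induction_on with
  | zero => simp
  | tmul a b => simp [hμ]
  | add x y hx hy => simp only [map_add, hx, hy]

end IteratedTwistedTensor

theorem iterated_twisted_tensor_general
    (R S A B : Type) [CommRing R] [CommRing S] [Algebra R S]
    [Ring A] [Algebra R A] [Ring B] [Algebra R B] [Algebra S B] [IsScalarTower R S B]
    -- the twisting map ψ₁ over R
    (ψ₁ : S ⊗[R] A →ₗ[R] A ⊗[R] S)
    (hψ₁a : ∀ a : A, ψ₁ ((1 : S) ⊗ₜ[R] a) = a ⊗ₜ[R] (1 : S))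
    -- the twisted multiplication μ₁ on C = A ⊗[R] S, S-bilinear
    (μ₁ : (A ⊗[R] S) →ₗ[S] (A ⊗[R] S) →ₗ[S] (A ⊗[R] S))
    (hμ₁ : ∀ (a₁ a₂ : A) (s₁ s₂ : S),
      μ₁ (a₁ ⊗ₜ[R] s₁) (a₂ ⊗ₜ[R] s₂) =
        TensorProduct.map (LinearMap.mulLeft R a₁) (LinearMap.mulRight R s₂)
          (ψ₁ (s₁ ⊗ₜ[R] a₂)))
    -- the twisting map ψ₂ over S
    (ψ₂ : B ⊗[S] (A ⊗[R] S) →ₗ[S] (A ⊗[R] S) ⊗[S] B)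
    -- the twisted multiplication μ₂ on C ⊗[S] B
    (μ₂ : ((A ⊗[R] S) ⊗[S] B) →ₗ[S] ((A ⊗[R] S) ⊗[S] B) →ₗ[S] ((A ⊗[R] S) ⊗[S] B))
    (hμ₂ : ∀ (c₁ c₂ : A ⊗[R] S) (b₁ b₂ : B),
      μ₂ (c₁ ⊗ₜ[S] b₁) (c₂ ⊗ₜ[S] b₂) =
        TensorProduct.map (μ₁ c₁) (LinearMap.mulRight S b₂) (ψ₂ (b₁ ⊗ₜ[S] c₂)))
    -- the contraction γ and the induced twisting map ψ₃ over R
    (γ : ((A ⊗[R] S) ⊗[S] B) →+ (A ⊗[R] B))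
    (hγ : ∀ (a : A) (s : S) (b : B), γ ((a ⊗ₜ[R] s) ⊗ₜ[S] b) = a ⊗ₜ[R] (s • b))
    (ψ₃ : B ⊗[R] A →ₗ[R] A ⊗[R] B)
    (hψ₃ : ∀ (b : B) (a : A),
      ψ₃ (b ⊗ₜ[R] a) = γ (ψ₂ (b ⊗ₜ[S] (a ⊗ₜ[R] (1 : S)))))
    -- the twisted multiplication μ₃ on A ⊗[R] B
    (μ₃ : (A ⊗[R] B) →ₗ[R] (A ⊗[R] B) →ₗ[R] (A ⊗[R] B))
    (hμ₃ : ∀ (a₁ a₂ : A) (b₁ b₂ : B),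
      μ₃ (a₁ ⊗ₜ[R] b₁) (a₂ ⊗ₜ[R] b₂) =
        TensorProduct.map (LinearMap.mulLeft R a₁) (LinearMap.mulRight R b₂)
          (ψ₃ (b₁ ⊗ₜ[R] a₂))) :
    ∃ f : (A ⊗[R] B) ≃+ ((A ⊗[R] S) ⊗[S] B),
      (∀ (a : A) (b : B), f (a ⊗ₜ[R] b) = ((a ⊗ₜ[R] (1 : S)) ⊗ₜ[S] b)) ∧
      (∀ (r : R) (x : A ⊗[R] B), f (r • x) = algebraMap R S r • f x) ∧
      (∀ x y : A ⊗[R] B, f (μ₃ x y) = μ₂ (f x) (f y)) := by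
  set F := tmulOneTmul R S A B
  have hF_mul_tmul (a₁ a₂ : A) (b₁ b₂ : B) :
      F (μ₃ (a₁ ⊗ₜ[R] b₁) (a₂ ⊗ₜ[R] b₂)) = μ₂ (F (a₁ ⊗ₜ[R] b₁)) (F (a₂ ⊗ₜ[R] b₂)) := by
    rw [hμ₃, hψ₃, tmulOneTmul_map_mulLeft_mulRight μ₁ a₁
      (twistedMul_tmul_one_tmul_one ψ₁ hψ₁a μ₁ hμ₁ a₁), rightInverse_tmulOneTmul hγ,
      tmulOneTmul_tmul, tmulOneTmul_tmul, hμ₂]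
  refine ⟨{ F.toAddMonoidHom with
      invFun := γ
      left_inv := leftInverse_tmulOneTmul hγ
      right_inv := rightInverse_tmulOneTmul hγ },
    tmulOneTmul_tmul, fun r x => by simp [F, algebraMap_smul], fun x y => ?_⟩
  change F (μ₃ x y) = μ₂ (F x) (F y)
  induction x using TensorProduct.induction_on with
  | zero => simp
  | add x₁ x₂ h₁ h₂ => simp only [map_add, LinearMap.add_apply, h₁, h₂]
  | tmul a₁ b₁ =>
    induction y using TensorProduct.induction_on with
    | zero => simp
    | add y₁ y₂ h₁ h₂ => simp only [map_add, h₁, h₂]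
    | tmul a₂ b₂ => exact hF_mul_tmul a₁ a₂ b₁ b₂

/-- Iterated twisted tensor products: given a twisting map `ψ₁ : S ⊗ A → A ⊗ S` over `R`
making `C = A ⊗_R^{ψ₁} S` (multiplication `μ₁`) an associative unital `S`-algebra, and a
twisting map `ψ₂ : B ⊗ C → C ⊗ B` over `S` (multiplication `μ₂` on `C ⊗_S B`), the map
`f : a ⊗ b ↦ (a ⊗ 1) ⊗ b` is an isomorphism `A ⊗_R^{ψ₃} B ≅ (A ⊗_R^{ψ₁} S) ⊗_S^{ψ₂} B`,
where `ψ₃ = γ ∘ ψ₂ ∘ (id_B ⊗ ι_A)` with `ι_A(a) = a ⊗ 1` and `γ(a ⊗ s ⊗ b) = a ⊗ s•b`. -/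
theorem iterated_twisted_tensor
    (R S A B : Type) [CommRing R] [CommRing S] [Algebra R S]
    [Ring A] [Algebra R A] [Ring B] [Algebra R B] [Algebra S B] [IsScalarTower R S B]
    -- the twisting map ψ₁ over R
    (ψ₁ : S ⊗[R] A →ₗ[R] A ⊗[R] S)
    (hψ₁a : ∀ a : A, ψ₁ ((1 : S) ⊗ₜ[R] a) = a ⊗ₜ[R] (1 : S))
    (hψ₁s : ∀ s : S, ψ₁ (s ⊗ₜ[R] (1 : A)) = (1 : A) ⊗ₜ[R] s)
    -- the twisted multiplication μ₁ on C = A ⊗[R] S, S-bilinear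
    (μ₁ : (A ⊗[R] S) →ₗ[S] (A ⊗[R] S) →ₗ[S] (A ⊗[R] S))
    (hμ₁ : ∀ (a₁ a₂ : A) (s₁ s₂ : S),
      μ₁ (a₁ ⊗ₜ[R] s₁) (a₂ ⊗ₜ[R] s₂) =
        TensorProduct.map (LinearMap.mulLeft R a₁) (LinearMap.mulRight R s₂)
          (ψ₁ (s₁ ⊗ₜ[R] a₂)))
    (hμ₁assoc : ∀ x y z : A ⊗[R] S, μ₁ (μ₁ x y) z = μ₁ x (μ₁ y z))
    (hμ₁one : ∀ x : A ⊗[R] S,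
      μ₁ ((1 : A) ⊗ₜ[R] (1 : S)) x = x ∧ μ₁ x ((1 : A) ⊗ₜ[R] (1 : S)) = x)
    -- the twisting map ψ₂ over S
    (ψ₂ : B ⊗[S] (A ⊗[R] S) →ₗ[S] (A ⊗[R] S) ⊗[S] B)
    (hψ₂c : ∀ c : A ⊗[R] S, ψ₂ ((1 : B) ⊗ₜ[S] c) = c ⊗ₜ[S] (1 : B))
    (hψ₂b : ∀ b : B,
      ψ₂ (b ⊗ₜ[S] ((1 : A) ⊗ₜ[R] (1 : S))) = ((1 : A) ⊗ₜ[R] (1 : S)) ⊗ₜ[S] b)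
    -- the twisted multiplication μ₂ on C ⊗[S] B
    (μ₂ : ((A ⊗[R] S) ⊗[S] B) →ₗ[S] ((A ⊗[R] S) ⊗[S] B) →ₗ[S] ((A ⊗[R] S) ⊗[S] B))
    (hμ₂ : ∀ (c₁ c₂ : A ⊗[R] S) (b₁ b₂ : B),
      μ₂ (c₁ ⊗ₜ[S] b₁) (c₂ ⊗ₜ[S] b₂) =
        TensorProduct.map (μ₁ c₁) (LinearMap.mulRight S b₂) (ψ₂ (b₁ ⊗ₜ[S] c₂)))
    -- the contraction γ and the induced twisting map ψ₃ over R
    (γ : ((A ⊗[R] S) ⊗[S] B) →+ (A ⊗[R] B))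
    (hγ : ∀ (a : A) (s : S) (b : B), γ ((a ⊗ₜ[R] s) ⊗ₜ[S] b) = a ⊗ₜ[R] (s • b))
    (ψ₃ : B ⊗[R] A →ₗ[R] A ⊗[R] B)
    (hψ₃ : ∀ (b : B) (a : A),
      ψ₃ (b ⊗ₜ[R] a) = γ (ψ₂ (b ⊗ₜ[S] (a ⊗ₜ[R] (1 : S)))))
    -- the twisted multiplication μ₃ on A ⊗[R] B
    (μ₃ : (A ⊗[R] B) →ₗ[R] (A ⊗[R] B) →ₗ[R] (A ⊗[R] B))
    (hμ₃ : ∀ (a₁ a₂ : A) (b₁ b₂ : B),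
      μ₃ (a₁ ⊗ₜ[R] b₁) (a₂ ⊗ₜ[R] b₂) =
        TensorProduct.map (LinearMap.mulLeft R a₁) (LinearMap.mulRight R b₂)
          (ψ₃ (b₁ ⊗ₜ[R] a₂))) :
    ∃ f : (A ⊗[R] B) ≃+ ((A ⊗[R] S) ⊗[S] B),
      (∀ (a : A) (b : B), f (a ⊗ₜ[R] b) = ((a ⊗ₜ[R] (1 : S)) ⊗ₜ[S] b)) ∧
      (∀ (r : R) (x : A ⊗[R] B), f (r • x) = algebraMap R S r • f x) ∧
      (∀ x y : A ⊗[R] B, f (μ₃ x y) = μ₂ (f x) (f y)) :=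
  iterated_twisted_tensor_general R S A B ψ₁ hψ₁a μ₁ hμ₁ ψ₂ μ₂ hμ₂ γ hγ ψ₃ hψ₃ μ₃ hμ₃
end
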